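/- Let G be a hyperbolic group with finite symmetric generating set S, word length |·|, and δ ≥ 1 a hyperbolicity constant for the Cayley graph. Then there is a constant A such that for every n ≥ 1, the number of distinct conjugacy classes of the form C^d, where d ≥ 1 ranges over integers and C over conjugacy classes with |C| < 16δ, that contain an element of word length at most n, is at most A·n. -/

import Mathlib

/-- The word length of `g` with respect to the generating set `S`. -/
noncomputable def wordLength {G : Type*} [Group G] (S : Set G) (g : G) : ℕ :=
  sInf {n | ∃ l : List G, (∀ x ∈ l, x ∈ S) ∧ l.prod = g ∧ l.length = n}

/-- `|C| = min {|x| : x ∈ C}`, the minimal word length in a conjugacy class `C`. -/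
noncomputable def minConjLength {G : Type*} [Group G] (S : Set G) (C : Set G) : ℕ :=
  sInf (wordLength S '' C)

/-- The Gromov product for the word metric on `G` with respect to `S`. -/
noncomputable def wordGromovProd {G : Type*} [Group G] (S : Set G) (x y z : G) : ℝ :=
  ((wordLength S (x⁻¹ * z) : ℝ) + (wordLength S (y⁻¹ * z) : ℝ) - (wordLength S (x⁻¹ * y) : ℝ)) / 2

/-- The word metric of `(G,S)` satisfies the four-point condition with constant `δ`. -/
def FourPointWith {G : Type*} [Group G] (S : Set G) (δ : ℝ) : Prop :=
  ∀ x y z w : G,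
    min (wordGromovProd S x z w) (wordGromovProd S y z w) ≤ wordGromovProd S x y w + δ

/-- `G` is Gromov-hyperbolic with respect to `S`: its word metric satisfies the four-point
condition for some `δ ≥ 0`. -/
def IsHyperbolicWith {G : Type*} [Group G] (S : Set G) : Prop :=
  ∃ δ : ℝ, 0 ≤ δ ∧ FourPointWith S δ

/-!
Only finitely many conjugacy classes `C` have `|C| < 16δ`, so it suffices to count, for a fixed `x`,
the classes of its powers `x^d` that meet the ball of radius `n`. If some power `x^d₀` is conjugate
to an element `g` that is shortest in its class and has `|g| > 6δ + 2`, splitting `g` at its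
midpoint and applying the four-point condition twice gives `|g²| ≥ |g| + 2δ + 1`; the four-point
condition along the orbit `(gᵏ)` then makes `k ↦ |gᵏ|` grow by at least one per step. Comparing
`g^(dm)` with `z^(d₀m)` for a conjugate `z` of `x^d` with `|z| ≤ n` yields `d ≤ d₀ n`. Otherwise
every power of `x` is conjugate into the ball of radius `6δ + 2`, which bounds the number of
classes independently of `n`.
-/

open scoped Pointwise

section WordLength

variable {G : Type*} [Group G] {S : Set G}

theorem wordLength_list_prod_le {l : List G} (hl : ∀ x ∈ l, x ∈ S) :
    wordLength S l.prod ≤ l.length :=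
  Nat.sInf_le ⟨l, hl, rfl, rfl⟩

theorem wordLength_one : wordLength S (1 : G) = 0 :=
  Nat.le_zero.1 (wordLength_list_prod_le (l := []) (by simp))

variable (hSgen : Subgroup.closure S = ⊤) (hSsymm : ∀ s ∈ S, s⁻¹ ∈ S)
include hSgen hSsymm

theorem exists_list_prod_eq_length (g : G) :
    ∃ l : List G, (∀ x ∈ l, x ∈ S) ∧ l.prod = g ∧ l.length = wordLength S g := by
  have hS : S ∪ S⁻¹ = S := Set.union_eq_left.2 fun s hs => by simpa using hSsymm _ hs
  have hg : g ∈ Submonoid.closure S := by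
    rw [← hS, ← Subgroup.closure_toSubmonoid, hSgen]; trivial
  obtain ⟨l, hl, rfl⟩ := Submonoid.exists_list_of_mem_closure hg
  have hne :
      {n | ∃ l' : List G, (∀ x ∈ l', x ∈ S) ∧ l'.prod = l.prod ∧ l'.length = n}.Nonempty :=
    ⟨l.length, l, hl, rfl, rfl⟩
  exact Nat.sInf_mem hne

theorem wordLength_mul_le (g h : G) :
    wordLength S (g * h) ≤ wordLength S g + wordLength S h := by
  obtain ⟨l₁, hl₁, rfl, e₁⟩ := exists_list_prod_eq_length hSgen hSsymm g
  obtain ⟨l₂, hl₂, rfl, e₂⟩ := exists_list_prod_eq_length hSgen hSsymm h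
  rw [← e₁, ← e₂, ← List.prod_append, ← List.length_append]
  exact wordLength_list_prod_le fun x hx => (List.mem_append.1 hx).elim (hl₁ x) (hl₂ x)

theorem wordLength_inv (g : G) : wordLength S g⁻¹ = wordLength S g := by
  have inv_le (g : G) : wordLength S g⁻¹ ≤ wordLength S g := by
    obtain ⟨l, hl, rfl, e⟩ := exists_list_prod_eq_length hSgen hSsymm g
    rw [← e, List.prod_inv_reverse]
    simpa using wordLength_list_prod_le (S := S) (l := (l.map (·⁻¹)).reverse) (by
      simp only [List.mem_reverse, List.mem_map]
      rintro _ ⟨x, hx, rfl⟩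
      exact hSsymm x (hl x hx))
  exact le_antisymm (inv_le g) (by simpa using inv_le g⁻¹)

theorem wordLength_pow_le (g : G) (m : ℕ) : wordLength S (g ^ m) ≤ m * wordLength S g := by
  induction m with
  | zero => simp [wordLength_one]
  | succ k ih =>
    rw [pow_succ, add_one_mul]
    exact (wordLength_mul_le hSgen hSsymm _ _).trans (by omega)

theorem wordLength_conj_le (c g : G) :
    wordLength S (c * g * c⁻¹) ≤ wordLength S g + 2 * wordLength S c := by
  have := wordLength_mul_le hSgen hSsymm (c * g) c⁻¹
  have := wordLength_mul_le hSgen hSsymm c g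
  have := wordLength_inv hSgen hSsymm c
  omega

theorem exists_mul_eq_wordLength_eq {g : G} {k : ℕ} (hk : k ≤ wordLength S g) :
    ∃ p q : G, p * q = g ∧ wordLength S p = k ∧ wordLength S q = wordLength S g - k := by
  obtain ⟨l, hl, rfl, e⟩ := exists_list_prod_eq_length hSgen hSsymm g
  refine ⟨(l.take k).prod, (l.drop k).prod,
    by rw [← List.prod_append, List.take_append_drop], ?_⟩
  have hp := wordLength_list_prod_le (S := S) (l := l.take k) fun x hx =>
    hl x (List.mem_of_mem_take hx)
  have hq := wordLength_list_prod_le (S := S) (l := l.drop k) fun x hx =>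
    hl x (List.mem_of_mem_drop hx)
  have hpq := wordLength_mul_le hSgen hSsymm (l.take k).prod (l.drop k).prod
  rw [← List.prod_append, List.take_append_drop] at hpq
  simp only [List.length_take, List.length_drop] at hp hq
  omega

theorem finite_setOf_wordLength_le (hSfin : S.Finite) (R : ℕ) :
    {g : G | wordLength S g ≤ R}.Finite := by
  have := hSfin.to_subtype
  refine ((List.finite_length_le S R).image fun l => (l.map (↑)).prod).subset fun g hg => ?_
  obtain ⟨l, hl, rfl, hlen⟩ := exists_list_prod_eq_length hSgen hSsymm g
  lift l to List S using hl
  exact ⟨l, by simpa using hlen.trans_le hg, rfl⟩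

end WordLength

section Conj
variable {G : Type*} [Group G]

def IsConjMinimal (S : Set G) (g : G) : Prop :=
  ∀ h, IsConj g h → wordLength S g ≤ wordLength S h

theorem exists_isConj_isConjMinimal (S : Set G) (x : G) :
    ∃ g, IsConj x g ∧ IsConjMinimal S g ∧
      wordLength S g = minConjLength S (conjugatesOf x) := by
  obtain ⟨g, hg, hgl⟩ :=
    Nat.sInf_mem (s := wordLength S '' conjugatesOf x) ⟨_, x, IsConj.refl x, rfl⟩
  refine ⟨g, hg, fun h hh => ?_, hgl⟩
  rw [hgl]
  exact Nat.sInf_le ⟨h, hg.trans hh, rfl⟩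

end Conj

section Hyperbolic

variable {G : Type*} [Group G] {S : Set G} {δ : ℝ}

theorem FourPointWith.nonneg (hhyp : FourPointWith S δ) : 0 ≤ δ := by
  simpa using hhyp 1 1 1 1

theorem FourPointWith.wordGromovProd_le_of_lt (hhyp : FourPointWith S δ) {x y z w : G} {t : ℝ}
    (hxy : wordGromovProd S x y w ≤ t) (hxz : t + δ < wordGromovProd S x z w) :
    wordGromovProd S y z w ≤ t + δ := by
  rcases min_le_iff.1 (hhyp x y z w) with h | h <;> linarith

variable (hSgen : Subgroup.closure S = ⊤) (hSsymm : ∀ s ∈ S, s⁻¹ ∈ S)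
include hSgen hSsymm

theorem le_wordLength_pow (hhyp : FourPointWith S δ) {g : G}
    (hg : (wordLength S g : ℝ) + 2 * δ + 1 ≤ wordLength S (g ^ 2)) (m : ℕ) :
    m ≤ wordLength S (g ^ m) := by
  set a : ℕ → ℝ := fun m => wordLength S (g ^ m)
  set L : ℝ := (wordLength S g : ℝ)
  set W : ℝ := (wordLength S (g ^ 2) : ℝ)
  have hcorner (k : ℕ) : wordGromovProd S (g ^ k) (g ^ (k + 2)) (g ^ (k + 1)) = L - W / 2 := by
    unfold wordGromovProd
    rw [show (g ^ k)⁻¹ * g ^ (k + 1) = g by group,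
      show (g ^ (k + 2))⁻¹ * g ^ (k + 1) = g⁻¹ by group,
      show (g ^ k)⁻¹ * g ^ (k + 2) = g ^ 2 by group, wordLength_inv hSgen hSsymm]
    ring
  have hback (k : ℕ) : wordGromovProd S (g ^ k) 1 (g ^ (k + 1)) = (L + a (k + 1) - a k) / 2 := by
    unfold wordGromovProd
    rw [show (g ^ k)⁻¹ * g ^ (k + 1) = g by group, inv_one, one_mul, mul_one,
      wordLength_inv hSgen hSsymm]
  have hfwd (k : ℕ) :
      wordGromovProd S (g ^ (k + 2)) 1 (g ^ (k + 1)) = (L + a (k + 1) - a (k + 2)) / 2 := by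
    unfold wordGromovProd
    rw [show (g ^ (k + 2))⁻¹ * g ^ (k + 1) = g⁻¹ by group, inv_one, one_mul, mul_one,
      wordLength_inv hSgen hSsymm, wordLength_inv hSgen hSsymm]
  -- The bound at `k` makes `(gᵏ | 1)_{gᵏ⁺¹}` large, so the four-point condition at `gᵏ⁺¹`
  -- forces `(gᵏ⁺² | 1)_{gᵏ⁺¹}` to be small: this is the bound at `k + 1`.
  have hdefect (k : ℕ) : a k + L - a (k + 1) ≤ 2 * L - W + 2 * δ := by
    induction k with
    | zero =>
      have hW : W ≤ 2 * L := by
        simp only [W, L, sq, two_mul]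
        exact_mod_cast wordLength_mul_le hSgen hSsymm g g
      simp only [a, pow_zero, pow_one, wordLength_one, Nat.cast_zero, zero_add]
      linarith [hhyp.nonneg]
    | succ k ih =>
      have := hhyp.wordGromovProd_le_of_lt (hcorner k).le (by rw [hback k]; linarith)
      rw [hfwd k] at this
      linarith
  suffices (m : ℝ) ≤ a m from Nat.cast_le.mp this
  induction m with
  | zero => simp [a]
  | succ k ih =>
    have := hdefect k
    push_cast
    linarith

-- Split `g = p * q` at its midpoint. Minimality of `g` in its class gives `(p | g * p)_g ≤ 0`;
-- the four-point condition then yields `(g * p | 1)_g ≤ δ` and `(1 | g²)_g ≤ 2δ`.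
theorem add_le_wordLength_sq (hhyp : FourPointWith S δ) {g : G} (hmin : IsConjMinimal S g)
    (hlong : 6 * δ + 2 < wordLength S g) :
    (wordLength S g : ℝ) + 2 * δ + 1 ≤ wordLength S (g ^ 2) := by
  obtain ⟨K, hK⟩ : ∃ K, 2 * K ≤ wordLength S g ∧ wordLength S g ≤ 2 * K + 1 :=
    ⟨wordLength S g / 2, by omega⟩
  obtain ⟨p, q, hpq, hp, hq⟩ :=
    exists_mul_eq_wordLength_eq hSgen hSsymm (g := g) (k := K) (by omega)
  have hKR : 2 * (K : ℝ) ≤ wordLength S g ∧ (wordLength S g : ℝ) ≤ 2 * K + 1 := by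
    exact_mod_cast hK
  have hqR : (wordLength S q : ℝ) = wordLength S g - K := by rw [hq, Nat.cast_sub (by omega)]
  have hpinv : p⁻¹ * g = q := by rw [← hpq, inv_mul_cancel_left]
  have hcyc : (wordLength S g : ℝ) ≤ wordLength S (p⁻¹ * g * p) :=
    Nat.cast_le.2 (hmin _ (isConj_iff.2 ⟨p⁻¹, by group⟩))
  have hpgp : wordGromovProd S p (g * p) g ≤ 0 := by
    unfold wordGromovProd
    rw [hpinv, show (g * p)⁻¹ * g = p⁻¹ by group, wordLength_inv hSgen hSsymm, ← mul_assoc, hp,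
      hqR]
    linarith
  have hp1 : wordGromovProd S p 1 g = wordLength S g - K := by
    unfold wordGromovProd
    rw [hpinv, inv_one, one_mul, mul_one, wordLength_inv hSgen hSsymm, hp, hqR]
    ring
  have hgpg2 : wordGromovProd S (g * p) (g ^ 2) g = K := by
    unfold wordGromovProd
    rw [show (g * p)⁻¹ * g = p⁻¹ by group, show (g ^ 2)⁻¹ * g = g⁻¹ by group,
      show (g * p)⁻¹ * g ^ 2 = p⁻¹ * g by group, hpinv, wordLength_inv hSgen hSsymm,
      wordLength_inv hSgen hSsymm, hp, hqR]
    ring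
  have h1g2 :
      wordGromovProd S 1 (g ^ 2) g = wordLength S g - (wordLength S (g ^ 2) : ℝ) / 2 := by
    unfold wordGromovProd
    rw [inv_one, one_mul, one_mul, show (g ^ 2)⁻¹ * g = g⁻¹ by group,
      wordLength_inv hSgen hSsymm]
    ring
  have hδ := hhyp.nonneg
  have h1 : wordGromovProd S (g * p) 1 g ≤ δ := by
    simpa using hhyp.wordGromovProd_le_of_lt hpgp (by rw [hp1]; linarith)
  have h2 := hhyp.wordGromovProd_le_of_lt h1 (z := g ^ 2) (by rw [hgpg2]; linarith)
  rw [h1g2] at h2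
  linarith

theorem le_wordLength_pow_of_isConjMinimal (hhyp : FourPointWith S δ) {g : G}
    (hmin : IsConjMinimal S g) (hlong : 6 * δ + 2 < wordLength S g) (m : ℕ) :
    m ≤ wordLength S (g ^ m) :=
  le_wordLength_pow hSgen hSsymm hhyp (add_le_wordLength_sq hSgen hSsymm hhyp hmin hlong) m

theorem le_mul_wordLength_of_isConj {g z : G} (hg : ∀ m : ℕ, m ≤ wordLength S (g ^ m))
    {d k : ℕ} (h : IsConj (z ^ k) (g ^ d)) : d ≤ k * wordLength S z := by
  obtain ⟨c, hc⟩ := isConj_iff.1 h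
  have hlin (m : ℕ) : d * m ≤ k * wordLength S z * m + 2 * wordLength S c := calc
    d * m ≤ wordLength S (g ^ (d * m)) := hg _
    _ = wordLength S (c * z ^ (k * m) * c⁻¹) := by rw [pow_mul, ← hc, conj_pow, pow_mul]
    _ ≤ wordLength S (z ^ (k * m)) + 2 * wordLength S c := wordLength_conj_le hSgen hSsymm _ _
    _ ≤ k * wordLength S z * m + 2 * wordLength S c := by
      grw [wordLength_pow_le hSgen hSsymm]; rw [mul_right_comm]
  by_contra! hlt
  nlinarith [hlin (2 * wordLength S c + 1)]

end Hyperbolic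

def powClasses {G : Type*} [Group G] (S : Set G) (x : G) (n : ℕ) : Set (Set G) :=
  {D | ∃ d, 1 ≤ d ∧ D = conjugatesOf (x ^ d) ∧ ∃ z ∈ D, wordLength S z ≤ n}

section Counting

variable {G : Type*} [Group G] {S : Set G}

theorem powClasses_subset_image_conjugatesOf {x : G} {R : ℕ}
    (hR : ∀ d g, IsConj (x ^ d) g → IsConjMinimal S g → wordLength S g ≤ R) (n : ℕ) :
    powClasses S x n ⊆ conjugatesOf '' {g | wordLength S g ≤ R} := by
  rintro _ ⟨d, -, rfl, -⟩
  obtain ⟨g, hxg, hg, -⟩ := exists_isConj_isConjMinimal S (x ^ d)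
  exact ⟨g, hR d g hxg hg, hxg.conjugatesOf_eq.symm⟩

theorem subset_biUnion_powClasses (r : ℝ) (n : ℕ) :
    {D : Set G | ∃ (x : G) (d : ℕ), 1 ≤ d ∧
        (minConjLength S {y | IsConj x y} : ℝ) < r ∧
        D = {y | IsConj (x ^ d) y} ∧ ∃ z ∈ D, wordLength S z ≤ n} ⊆
      ⋃ x ∈ {g : G | wordLength S g ≤ ⌊r⌋₊}, powClasses S x n := by
  rintro _ ⟨x, d, hd, hx, rfl, hz⟩
  obtain ⟨g, hxg, -, hg⟩ := exists_isConj_isConjMinimal S x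
  refine Set.mem_biUnion (x := g) (Nat.le_floor ?_) ⟨d, hd, (hxg.pow d).conjugatesOf_eq, hz⟩
  exact hg ▸ hx.le

variable (hSgen : Subgroup.closure S = ⊤) (hSsymm : ∀ s ∈ S, s⁻¹ ∈ S)
include hSgen hSsymm

theorem powClasses_subset_image_Icc {x g : G} {d₀ : ℕ} (hxg : IsConj (x ^ d₀) g)
    (hg : ∀ m : ℕ, m ≤ wordLength S (g ^ m)) (n : ℕ) :
    powClasses S x n ⊆ (fun d => conjugatesOf (x ^ d)) '' ↑(Finset.Icc 1 (d₀ * n)) := by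
  rintro _ ⟨d, hd, rfl, z, hz, hzn⟩
  refine ⟨d, Finset.mem_coe.2 (Finset.mem_Icc.2 ⟨hd, ?_⟩), rfl⟩
  have hzg : IsConj (z ^ d₀) (g ^ d) := by
    refine (hz.pow d₀).symm.trans ?_
    rw [← pow_mul, mul_comm, pow_mul]
    exact hxg.pow d
  calc d ≤ d₀ * wordLength S z := le_mul_wordLength_of_isConj hSgen hSsymm hg hzg
    _ ≤ d₀ * n := Nat.mul_le_mul_left d₀ hzn

theorem exists_encard_powClasses_le (hSfin : S.Finite) {δ : ℝ} (hhyp : FourPointWith S δ)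
    (x : G) : ∃ C : ℕ, ∀ n, 1 ≤ n → (powClasses S x n).encard ≤ C * n := by
  by_cases hlong :
      ∃ d₀ g, IsConj (x ^ d₀) g ∧ IsConjMinimal S g ∧ 6 * δ + 2 < wordLength S g
  · obtain ⟨d₀, g, hxg, hmin, hlen⟩ := hlong
    have hg := le_wordLength_pow_of_isConjMinimal hSgen hSsymm hhyp hmin hlen
    refine ⟨d₀, fun n _ => ?_⟩
    calc (powClasses S x n).encard
        ≤ ((fun d => conjugatesOf (x ^ d)) '' ↑(Finset.Icc 1 (d₀ * n))).encard :=
          Set.encard_le_encard (powClasses_subset_image_Icc hSgen hSsymm hxg hg n)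
      _ ≤ (↑(Finset.Icc 1 (d₀ * n)) : Set ℕ).encard := Set.encard_image_le _ _
      _ = d₀ * n := by rw [Set.encard_coe_eq_coe_finsetCard, Nat.card_Icc]; simp
  · push Not at hlong
    have hball := finite_setOf_wordLength_le hSgen hSsymm hSfin ⌊6 * δ + 2⌋₊
    refine ⟨hball.toFinset.card, fun n hn => ?_⟩
    calc (powClasses S x n).encard
        ≤ (conjugatesOf '' {g | wordLength S g ≤ ⌊6 * δ + 2⌋₊}).encard :=
          Set.encard_le_encard (powClasses_subset_image_conjugatesOf
            (fun d g hxg hg => Nat.le_floor (hlong d g hxg hg)) n)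
      _ ≤ {g | wordLength S g ≤ ⌊6 * δ + 2⌋₊}.encard := Set.encard_image_le _ _
      _ = hball.toFinset.card := hball.encard_eq_coe_toFinset_card
      _ ≤ hball.toFinset.card * n := by norm_cast; exact Nat.le_mul_of_pos_right _ hn

end Counting

theorem stmt13_general {G : Type*} [Group G] (S : Set G) (hSfin : S.Finite)
    (hSsymm : ∀ s ∈ S, s⁻¹ ∈ S) (hSgen : Subgroup.closure S = ⊤)
    (δ : ℝ) (hhyp : FourPointWith S δ) :
    ∃ A : ℝ, ∀ n : ℕ, 1 ≤ n →
      Set.Finite {D : Set G | ∃ (x : G) (d : ℕ), 1 ≤ d ∧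
          (minConjLength S {y | IsConj x y} : ℝ) < 16 * δ ∧
          D = {y | IsConj (x ^ d) y} ∧ ∃ z ∈ D, wordLength S z ≤ n} ∧
      ({D : Set G | ∃ (x : G) (d : ℕ), 1 ≤ d ∧
          (minConjLength S {y | IsConj x y} : ℝ) < 16 * δ ∧
          D = {y | IsConj (x ^ d) y} ∧ ∃ z ∈ D, wordLength S z ≤ n}.ncard : ℝ) ≤ A * n := by
  choose C hC using exists_encard_powClasses_le hSgen hSsymm hSfin hhyp
  have hball := finite_setOf_wordLength_le hSgen hSsymm hSfin ⌊16 * δ⌋₊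
  refine ⟨∑ x ∈ hball.toFinset, C x, fun n hn => ?_⟩
  have hcard := calc
    _ ≤ (⋃ x ∈ hball.toFinset, powClasses S x n).encard := Set.encard_le_encard
        (by simpa only [Set.Finite.mem_toFinset] using subset_biUnion_powClasses (16 * δ) n)
    _ ≤ ∑ x ∈ hball.toFinset, (powClasses S x n).encard :=
        Finset.set_encard_biUnion_le _ _
    _ ≤ ∑ x ∈ hball.toFinset, (C x * n : ℕ∞) := Finset.sum_le_sum fun x _ => hC x n hn
    _ = ((∑ x ∈ hball.toFinset, C x) * n : ℕ) := by push_cast; rw [Finset.sum_mul]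
  obtain ⟨hfin, hle⟩ := Set.encard_le_coe_iff_finite_ncard_le.1 hcard
  exact ⟨hfin, by exact_mod_cast hle⟩

/-- Let `G` be hyperbolic with finite symmetric generating set `S` and
`δ ≥ 1` a hyperbolicity constant for the Cayley graph. There is a constant `A` such that for
every `n ≥ 1`, the number of distinct conjugacy classes of the form `C^d` — where `d ≥ 1` and
`C` is a conjugacy class with `|C| < 16δ` — containing an element of word length at most `n`
is at most `A·n`. -/
theorem stmt13 {G : Type*} [Group G] (S : Set G) (hSfin : S.Finite)
    (hSsymm : ∀ s ∈ S, s⁻¹ ∈ S) (hSgen : Subgroup.closure S = ⊤)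
    (δ : ℝ) (hδ : 1 ≤ δ) (hhyp : FourPointWith S δ) :
    ∃ A : ℝ, ∀ n : ℕ, 1 ≤ n →
      Set.Finite {D : Set G | ∃ (x : G) (d : ℕ), 1 ≤ d ∧
          (minConjLength S {y | IsConj x y} : ℝ) < 16 * δ ∧
          D = {y | IsConj (x ^ d) y} ∧ ∃ z ∈ D, wordLength S z ≤ n} ∧
      ({D : Set G | ∃ (x : G) (d : ℕ), 1 ≤ d ∧
          (minConjLength S {y | IsConj x y} : ℝ) < 16 * δ ∧
          D = {y | IsConj (x ^ d) y} ∧ ∃ z ∈ D, wordLength S z ≤ n}.ncard : ℝ) ≤ A * n :=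
  stmt13_general S hSfin hSsymm hSgen δ hhyp
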